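/- There exists C ∈ (1,∞) such that the following holds. Let ϱ, M, κ ∈ (0,∞), Λ ∈ [1,∞), δ ∈ (0, 1/(CΛ)], s₀ ∈ ℝ, y₀ ∈ ℝ^{n+k}, and let μ be a Radon measure on ℝ^{n+k}. Suppose μ(B(y₀, CΛϱ)) ≤ M ϱⁿ and ∫ Φ_{(s₀,y₀)} φ_{(s₀,y₀),Λϱ}(s₀−ϱ², x) dμ(x) ≤ 1+κ. Then for all (s,y) ∈ (s₀−δ²ϱ², s₀] × B(y₀, δϱ) one has ∫ Φ_{(s,y)} φ_{(s,y),Λϱ}(s₀−ϱ², x) dμ(x) ≤ 1 + κ + C M Λ δ. -/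

import Mathlib

noncomputable section

open MeasureTheory Metric Filter Set Function
open scoped ENNReal NNReal Topology RealInnerProductSpace

namespace BrakkePaper

/-- Euclidean space `ℝ^d`. -/
abbrev EV (d : ℕ) : Type := EuclideanSpace ℝ (Fin d)

/-- The first `n` coordinates of a point of `ℝ^{n+k}` (the `x̂` component). -/
def pfst (n k : ℕ) (x : EV (n + k)) : EV n := WithLp.toLp 2 (fun i => x (Fin.castAdd k i))

/-- The last `k` coordinates of a point of `ℝ^{n+k}` (the `x̃` component). -/
def psnd (n k : ℕ) (x : EV (n + k)) : EV k := WithLp.toLp 2 (fun j => x (Fin.natAdd n j))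

/-- Assemble a point of `ℝ^{n+k}` from its two components. -/
def pairEV (n k : ℕ) (y : EV n) (z : EV k) : EV (n + k) := WithLp.toLp 2 (fun i =>
  Fin.addCases (motive := fun _ => ℝ) (fun i₁ => y i₁) (fun j => z j) i)

/-- The open cylinder `C(a,r,h) = Bⁿ(â,r) × Bᵏ(ã,h)`. -/
def cyl (n k : ℕ) (a : EV (n + k)) (r h : ℝ) : Set (EV (n + k)) :=
  {x | dist (pfst n k x) (pfst n k a) < r ∧ dist (psnd n k x) (psnd n k a) < h}

/-- The graph of `u : ℝⁿ → ℝᵏ` over the set `s ⊆ ℝⁿ`, as a subset of `ℝ^{n+k}`. -/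
def graphOver (n k : ℕ) (s : Set (EV n)) (u : EV n → EV k) : Set (EV (n + k)) :=
  {x | pfst n k x ∈ s ∧ psnd n k x = u (pfst n k x)}

/-- `ωₙ`, the volume of the unit ball in `ℝⁿ`. -/
def unitBallVol (n : ℕ) : ℝ≥0∞ := volume (ball (0 : EV n) 1)

/-- The support of a measure. -/
def spt {d : ℕ} (μ : Measure (EV d)) : Set (EV d) :=
  {x | ∀ r : ℝ, 0 < r → 0 < μ (ball x r)}

/-- `T` is the approximate tangent space of `μ` at `x` with multiplicity `θ`. -/
def IsApproxTangent (n : ℕ) {d : ℕ} (μ : Measure (EV d)) (x : EV d)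
    (T : Submodule ℝ (EV d)) (θ : ℝ) : Prop :=
  Module.finrank ℝ T = n ∧
    ∀ φ : EV d → ℝ, Continuous φ → HasCompactSupport φ →
      Tendsto (fun lam : ℝ => (lam ^ n)⁻¹ * ∫ y, φ (lam⁻¹ • (y - x)) ∂μ)
        (𝓝[>] (0 : ℝ))
        (𝓝 (θ * ∫ y in (T : Set (EV d)), φ y ∂(μH[n] : Measure (EV d))))

/-- `μ` is `n`-rectifiable. -/
def Rectifiable (n : ℕ) {d : ℕ} (μ : Measure (EV d)) : Prop :=
  ∀ᵐ x ∂μ, ∃ T θ, IsApproxTangent n μ x T θ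

/-- `μ` is integer `n`-rectifiable. -/
def IntegerRectifiable (n : ℕ) {d : ℕ} (μ : Measure (EV d)) : Prop :=
  ∀ᵐ x ∂μ, ∃ T, ∃ m : ℕ, 0 < m ∧ IsApproxTangent n μ x T (m : ℝ)

/-- `μ` has unit density. -/
def UnitDensity (n : ℕ) {d : ℕ} (μ : Measure (EV d)) : Prop :=
  ∀ᵐ x ∂μ, ∃ T, IsApproxTangent n μ x T 1

/-- Orthogonal projection onto the subspace `T`. -/
def tangProj {d : ℕ} (T : Submodule ℝ (EV d)) (v : EV d) : EV d :=
  ((T.orthogonalProjectionOnto v : T) : EV d)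

/-- Orthogonal projection onto the orthogonal complement of `T`. -/
def normalProj {d : ℕ} (T : Submodule ℝ (EV d)) (v : EV d) : EV d :=
  ((Tᗮ.orthogonalProjectionOnto v : Tᗮ) : EV d)

/-- The tangential divergence `div_T φ (x) = trace (P_T ∘ Dφ(x))`. -/
def tangentialDiv {d : ℕ} (T : Submodule ℝ (EV d)) (φ : EV d → EV d) (x : EV d) : ℝ :=
  LinearMap.trace ℝ (EV d)
    ((T.subtype.comp (T.orthogonalProjectionOnto).toLinearMap).comp (fderiv ℝ φ x).toLinearMap)

/-- `μ` has generalized mean curvature vector `H` in `U`, with tangent field `τ`. -/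
def HasGenMeanCurv (n : ℕ) {d : ℕ} (μ : Measure (EV d)) (U : Set (EV d))
    (H : EV d → EV d) (τ : EV d → Submodule ℝ (EV d)) : Prop :=
  (∀ᵐ x ∂μ.restrict U, ∃ θ : ℝ, IsApproxTangent n (μ.restrict U) x (τ x) θ) ∧
  LocallyIntegrable H (μ.restrict U) ∧
  ∀ φ : EV d → EV d, ContDiff ℝ 1 φ → HasCompactSupport φ → tsupport φ ⊆ U →
    ∫ x, tangentialDiv (τ x) φ x ∂(μ.restrict U) = ∫ x, ⟪H x, φ x⟫ ∂(μ.restrict U)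

/-- The technical conditions in the definition of the Brakke variation `𝓑(μ,φ)`. -/
def BrakkeCond (n : ℕ) {d : ℕ} (μ : Measure (EV d)) (φ : EV d → ℝ)
    (H : EV d → EV d) (τ : EV d → Submodule ℝ (EV d)) : Prop :=
  Rectifiable n (μ.restrict {x | 0 < φ x}) ∧
  HasGenMeanCurv n μ {x | 0 < φ x} H τ ∧
  IntegrableOn (fun x => ‖H x‖ ^ 2) {x | 0 < φ x} μ

/-- The integrand of the Brakke variation. -/
def brakkeIntegrand {d : ℕ} (φ : EV d → ℝ) (H : EV d → EV d)
    (τ : EV d → Submodule ℝ (EV d)) (x : EV d) : ℝ :=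
  ⟪normalProj (τ x) (gradient φ x), H x⟫ - φ x * ‖H x‖ ^ 2

open Classical in
/-- The Brakke variation `𝓑(μ,φ)`, an extended real number which is `⊥` when the
technical conditions fail. -/
def brakkeVar (n : ℕ) {d : ℕ} (μ : Measure (EV d)) (φ : EV d → ℝ) : EReal :=
  if h : ∃ p : (EV d → EV d) × (EV d → Submodule ℝ (EV d)), BrakkeCond n μ φ p.1 p.2 then
    ((∫ x in {x | 0 < φ x}, brakkeIntegrand φ h.choose.1 h.choose.2 x ∂μ : ℝ) : EReal)
  else (⊥ : EReal)

/-- `(μ_t)_{t ∈ [t₁,t₂]}` is a Brakke flow in the open set `U`. -/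
structure IsBrakkeFlowIn (n : ℕ) {d : ℕ} (μ : ℝ → Measure (EV d)) (U : Set (EV d))
    (t₁ t₂ : ℝ) : Prop where
  radon : ∀ t ∈ Icc t₁ t₂, ∀ K : Set (EV d), IsCompact K → μ t K ≠ ∞
  aeRect : ∀ᵐ t ∂(volume.restrict (Ioo t₁ t₂)), IntegerRectifiable n ((μ t).restrict U)
  ineq : ∀ s₁ s₂ : ℝ, t₁ ≤ s₁ → s₁ < s₂ → s₂ ≤ t₂ →
    ∀ φ : ℝ → EV d → ℝ,
      ContinuousOn (fun q : ℝ × EV d => φ q.1 q.2) (Icc s₁ s₂ ×ˢ U) →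
      ContDiffOn ℝ 1 (fun q : ℝ × EV d => φ q.1 q.2) (Ioo s₁ s₂ ×ˢ U) →
      (∀ t ∈ Icc s₁ s₂, IsCompact (tsupport (φ t)) ∧ tsupport (φ t) ⊆ U) →
      (∀ᵐ t ∂(volume.restrict (Ioo s₁ s₂)), brakkeVar n (μ t) (φ t) ≠ ⊥) ∧
      (∫ x, φ s₂ x ∂(μ s₂)) - (∫ x, φ s₁ x ∂(μ s₁)) ≤
        ∫ t in Ioo s₁ s₂,
          ((brakkeVar n (μ t) (φ t)).toReal + ∫ x, deriv (fun s => φ s x) t ∂(μ t))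

/-- An integral Brakke flow in `U`. -/
def IsIntegralBrakkeFlowIn (n : ℕ) {d : ℕ} (μ : ℝ → Measure (EV d)) (U : Set (EV d))
    (t₁ t₂ : ℝ) : Prop :=
  IsBrakkeFlowIn n μ U t₁ t₂ ∧ ∀ t ∈ Icc t₁ t₂, IntegerRectifiable n (μ t)

/-! ### Smooth mean curvature flow -/

/-- Standard basis vector of `ℝⁿ`. -/
def stdB (n : ℕ) (i : Fin n) : EV n := EuclideanSpace.single i 1

/-- Partial derivative `∂ᵢ F`. -/
def pderiv1 {n d : ℕ} (F : EV n → EV d) (i : Fin n) (p : EV n) : EV d :=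
  fderiv ℝ F p (stdB n i)

/-- The tangent space of the parametrized surface `F` at the parameter `p`. -/
def tangentAt {n d : ℕ} (F : EV n → EV d) (p : EV n) : Submodule ℝ (EV d) :=
  Submodule.span ℝ (Set.range fun i => pderiv1 F i p)

/-- The induced metric `g_{ij}`. -/
def gMat {n d : ℕ} (F : EV n → EV d) (p : EV n) : Matrix (Fin n) (Fin n) ℝ :=
  Matrix.of fun i j => ⟪pderiv1 F i p, pderiv1 F j p⟫

/-- The second fundamental form `A_{ij} = (∂ᵢ∂ⱼF)^⊥`. -/
def secondFF {n d : ℕ} (F : EV n → EV d) (p : EV n) (i j : Fin n) : EV d :=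
  normalProj (tangentAt F p) (pderiv1 (fun q => pderiv1 F i q) j p)

/-- The mean curvature vector `H = g^{ij} A_{ij}`. -/
def meanCurv {n d : ℕ} (F : EV n → EV d) (p : EV n) : EV d :=
  ∑ i : Fin n, ∑ j : Fin n, ((gMat F p)⁻¹ i j) • secondFF F p i j

/-- Christoffel symbols `Γ^l_{ij}`. -/
def christoffel {n d : ℕ} (F : EV n → EV d) (p : EV n) (i j l : Fin n) : ℝ :=
  ∑ r : Fin n, ((gMat F p)⁻¹ l r) * ⟪pderiv1 (fun q => pderiv1 F i q) j p, pderiv1 F r p⟫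

/-- The covariant derivative (with respect to the induced connection, using the normal
connection in the normal bundle) of a normal-bundle valued covariant `m`-tensor field. -/
def covDeriv {n d : ℕ} (F : EV n → EV d) {m : ℕ}
    (T : (Fin m → Fin n) → EV n → EV d) : (Fin (m + 1) → Fin n) → EV n → EV d :=
  fun idx p =>
    normalProj (tangentAt F p) (fderiv ℝ (T (Fin.tail idx)) p (stdB n (idx 0)))
      - ∑ a : Fin m, ∑ q : Fin n,
          christoffel F p (idx 0) (Fin.tail idx a) q • T (Function.update (Fin.tail idx) a q) p

/-- The iterated covariant derivative `∇^m A` of the second fundamental form. -/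
def covA {n d : ℕ} (F : EV n → EV d) : (m : ℕ) → (Fin (m + 2) → Fin n) → EV n → EV d
  | 0 => fun idx p => secondFF F p (idx 0) (idx 1)
  | (m + 1) => covDeriv F (covA F m)

/-- The squared norm (with respect to the induced metric) of a covariant tensor field. -/
def tensorNormSq {n d : ℕ} (F : EV n → EV d) {m : ℕ}
    (T : (Fin m → Fin n) → EV n → EV d) (p : EV n) : ℝ :=
  ∑ idx : Fin m → Fin n, ∑ idx' : Fin m → Fin n,
    (∏ a : Fin m, ((gMat F p)⁻¹ (idx a) (idx' a))) * ⟪T idx p, T idx' p⟫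

/-- `|∇^m A|²` at the parameter `p`. -/
def normSqCovA {n d : ℕ} (F : EV n → EV d) (m : ℕ) (p : EV n) : ℝ :=
  tensorNormSq F (covA F m) p

/-- A smooth family of embeddings of `Ω` parametrized by `I`. -/
def IsSmoothEmbeddingFamily {n d : ℕ} (F : ℝ → EV n → EV d) (I : Set ℝ)
    (Ω : Set (EV n)) : Prop :=
  ContDiffOn ℝ (⊤ : ℕ∞) (fun q : ℝ × EV n => F q.1 q.2) (I ×ˢ Ω) ∧
  ∀ t ∈ I, InjOn (F t) Ω ∧ ∀ p ∈ Ω, ∀ v : EV n, fderiv ℝ (F t) p v = 0 → v = 0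

/-- `F` moves by smooth mean curvature flow: `(∂ₜ F)^⊥ = H`. -/
def MovesByMCF {n d : ℕ} (F : ℝ → EV n → EV d) (I : Set ℝ) (Ω : Set (EV n)) : Prop :=
  ∀ t ∈ I, ∀ p ∈ Ω,
    normalProj (tangentAt (F t) p) (deriv (fun s => F s p) t) = meanCurv (F t) p

/-- The graph parametrization `x̂ ↦ (x̂, u(x̂))`. -/
def graphMap (n k : ℕ) (u : EV n → EV k) : EV n → EV (n + k) :=
  fun x => pairEV n k x (u x)

/-- The family of graphs of `u(t,·)` moves by smooth mean curvature flow. -/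
def GraphMovesByMCF (n k : ℕ) (u : ℝ → EV n → EV k) (I : Set ℝ) (Ω : Set (EV n)) : Prop :=
  MovesByMCF (fun t => graphMap n k (u t)) I Ω

/-- Huisken's backward heat kernel `Φ_{(t₀,x₀)}`. -/
def gaussK (n : ℕ) {d : ℕ} (t₀ : ℝ) (x₀ : EV d) (t : ℝ) (x : EV d) : ℝ :=
  (4 * Real.pi * (t₀ - t)) ^ (-(n : ℝ) / 2) * Real.exp (‖x - x₀‖ ^ 2 / (4 * (t - t₀)))

/-- The localization `φ_{(t₀,x₀),ρ}`. -/
def gaussCut (n : ℕ) {d : ℕ} (t₀ : ℝ) (x₀ : EV d) (ρ : ℝ) (t : ℝ) (x : EV d) : ℝ :=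
  (max (1 - (ρ ^ 2)⁻¹ * (‖x - x₀‖ ^ 2 + 2 * n * (t - t₀))) 0) ^ 3

/-- `S` is `m`-rectifiable as a set. -/
def SetRectifiable (m : ℕ) {d : ℕ} (S : Set (EV d)) : Prop :=
  ∃ (f : ℕ → EV m → EV d) (s : ℕ → Set (EV m)),
    (∀ i, ∃ K : ℝ≥0, LipschitzOnWith K (f i) (s i)) ∧
    (μH[m] : Measure (EV d)) (S \ ⋃ i, f i '' s i) = 0


lemma exp_neg_sub_exp_neg_le {a b : ℝ} (ha : 0 ≤ a) (hab : a ≤ b) :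
    Real.exp (-a) - Real.exp (-b) ≤ b - a := by
  have h1 : Real.exp (-b) = Real.exp (-a) * Real.exp (a - b) := by
    rw [← Real.exp_add]; ring_nf
  have h2 : 1 + (a - b) ≤ Real.exp (a - b) := by linarith [Real.add_one_le_exp (a - b)]
  have h3 : Real.exp (-a) ≤ 1 := Real.exp_le_one_iff.2 (by linarith)
  have h4 : (0:ℝ) < Real.exp (-a) := Real.exp_pos _
  nlinarith

lemma mul_le_mul_aux {a a' x y : ℝ} (ha : 0 ≤ a) (haa : a ≤ a') (hxy : x ≤ y) (hy : 0 ≤ y) :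
    a * x ≤ a' * y := by
  rcases le_total x 0 with h | h
  · nlinarith
  · nlinarith

set_option maxHeartbeats 4000000 in
lemma realCore (n : ℕ) (hn : 1 ≤ n) (ϱ Λ δ τ r r₀ : ℝ)
    (hϱ : 0 < ϱ) (hΛ : 1 ≤ Λ) (hδ0 : 0 < δ) (hδΛ : δ * Λ ≤ 1/2)
    (hτ1 : (1 - δ^2) * ϱ^2 ≤ τ) (hτ2 : τ ≤ ϱ^2)
    (hr : 0 ≤ r) (hr0 : 0 ≤ r₀) (hrr : |r - r₀| ≤ δ * ϱ) :
    (4*Real.pi*τ) ^ (-(n:ℝ)/2) * Real.exp (-(r^2/(4*τ))) *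
      (max (1 - ((Λ*ϱ)^2)⁻¹ * (r^2 - 2*(n:ℝ)*τ)) 0)^3
    ≤ (4*Real.pi*ϱ^2) ^ (-(n:ℝ)/2) * Real.exp (-(r₀^2/(4*ϱ^2))) *
      (max (1 - ((Λ*ϱ)^2)⁻¹ * (r₀^2 - 2*(n:ℝ)*ϱ^2)) 0)^3
      + (2*(n:ℝ)+2)^6 * Λ * δ * (ϱ^n)⁻¹ := by
  set N := (n:ℝ) with hNdef
  clear_value N
  have hN : 1 ≤ N := by rw [hNdef]; exact_mod_cast hn
  have hδ1 : δ ≤ 1/2 := le_trans (le_mul_of_one_le_right hδ0.le hΛ) hδΛ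
  have hπ : (3:ℝ) < Real.pi := Real.pi_gt_three
  have hϱ2 : (0:ℝ) < ϱ^2 := by positivity
  have hδsq : δ^2 ≤ 1/4 := by nlinarith
  have hτlo : 3/4 * ϱ^2 ≤ τ := by
    have := mul_le_mul_of_nonneg_right (show (3:ℝ)/4 ≤ 1 - δ^2 by linarith) hϱ2.le
    linarith
  have hτpos : 0 < τ := by nlinarith
  have hL2 : (0:ℝ) < (Λ*ϱ)^2 := by positivity
  have hϱL : ϱ^2 ≤ (Λ*ϱ)^2 := by
    have h : (Λ*ϱ)^2 = Λ^2*ϱ^2 := by ring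
    have h2 : (1:ℝ) ≤ Λ^2 := by nlinarith
    nlinarith [mul_le_mul_of_nonneg_right h2 hϱ2.le]
  have hbase : ϱ^2 ≤ 4*Real.pi*τ := by nlinarith
  have hbasepos : (0:ℝ) < 4*Real.pi*τ := by nlinarith
  have hbase0 : ϱ^2 ≤ 4*Real.pi*ϱ^2 := by nlinarith
  have hbase0pos : (0:ℝ) < 4*Real.pi*ϱ^2 := by nlinarith
  have hexp2 : (ϱ^2 : ℝ) ^ (-(N:ℝ)/2) = (ϱ^n)⁻¹ := by
    rw [← Real.rpow_natCast ϱ 2, ← Real.rpow_mul hϱ.le]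
    rw [show ((2:ℕ):ℝ) * (-(N:ℝ)/2) = -N by push_cast; ring]
    rw [Real.rpow_neg hϱ.le, hNdef, Real.rpow_natCast]
  have hexpneg : (-(N:ℝ)/2) ≤ 0 := by linarith
  have hAle : (4*Real.pi*τ)^(-(N:ℝ)/2) ≤ (ϱ^n)⁻¹ := by
    rw [← hexp2]; exact Real.rpow_le_rpow_of_nonpos hϱ2 hbase hexpneg
  have hA0le : (4*Real.pi*ϱ^2)^(-(N:ℝ)/2) ≤ (ϱ^n)⁻¹ := by
    rw [← hexp2]; exact Real.rpow_le_rpow_of_nonpos hϱ2 hbase0 hexpneg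
  set A := (4*Real.pi*τ) ^ (-(N:ℝ)/2) with hA
  set A₀ := (4*Real.pi*ϱ^2) ^ (-(N:ℝ)/2) with hA0
  clear_value A A₀
  have hApos : 0 < A := by rw [hA]; exact Real.rpow_pos_of_pos hbasepos _
  have hA0pos : 0 < A₀ := by rw [hA0]; exact Real.rpow_pos_of_pos hbase0pos _
  have hAA0 : A₀ ≤ A := by
    rw [hA, hA0]
    exact Real.rpow_le_rpow_of_nonpos hbasepos (by nlinarith) hexpneg
  -- bound on A - A₀
  have hAsub : A - A₀ ≤ N * δ^2 * (ϱ^n)⁻¹ := by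
    set a := τ / ϱ^2 with hadef
    have ha0 : 0 < a := div_pos hτpos hϱ2
    have ha1 : a ≤ 1 := (div_le_one hϱ2).2 hτ2
    have haδ : 1 - δ^2 ≤ a := (le_div_iff₀ hϱ2).2 (by linarith)
    have hfact : A₀ = A * a ^ ((N:ℝ)/2) := by
      have ha' : a = (4*Real.pi*τ) / (4*Real.pi*ϱ^2) := by
        rw [hadef]; rw [div_eq_div_iff hϱ2.ne' hbase0pos.ne']; ring
      rw [ha', Real.div_rpow hbasepos.le hbase0pos.le, hA, hA0]
      rw [neg_div, Real.rpow_neg hbasepos.le, Real.rpow_neg hbase0pos.le]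
      have h1 : (4*Real.pi*τ) ^ ((N:ℝ)/2) ≠ 0 := ne_of_gt (Real.rpow_pos_of_pos hbasepos _)
      have h2 : (4*Real.pi*ϱ^2) ^ ((N:ℝ)/2) ≠ 0 := ne_of_gt (Real.rpow_pos_of_pos hbase0pos _)
      field_simp
    have hbern : 1 - a ^ ((N:ℝ)/2) ≤ N * δ^2 := by
      have h1 : a ^ (N:ℝ) ≤ a ^ ((N:ℝ)/2) :=
        Real.rpow_le_rpow_of_exponent_ge ha0 ha1 (by linarith)
      have h2 : a ^ (N:ℝ) = a ^ n := by rw [hNdef, Real.rpow_natCast]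
      have h3 : 1 + (n:ℝ) * (a - 1) ≤ (1 + (a - 1)) ^ n := one_add_mul_le_pow (by linarith) n
      rw [show (1 + (a-1)) = a by ring] at h3
      rw [h2] at h1
      nlinarith
    have hmax : a ^ ((N:ℝ)/2) ≤ 1 := Real.rpow_le_one ha0.le ha1 (by linarith)
    calc A - A₀ = A * (1 - a ^ ((N:ℝ)/2)) := by rw [hfact]; ring
      _ ≤ (ϱ^n)⁻¹ * (N * δ^2) :=
          mul_le_mul hAle hbern (by linarith) (by positivity)
      _ = N * δ^2 * (ϱ^n)⁻¹ := by ring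
  -- cutoff variables
  set w := 1 - ((Λ*ϱ)^2)⁻¹ * (r^2 - 2*N*τ) with hw
  set w₀ := 1 - ((Λ*ϱ)^2)⁻¹ * (r₀^2 - 2*N*ϱ^2) with hw0
  set m := max w 0 with hm
  set m₀ := max w₀ 0 with hm0def
  clear_value w w₀ m m₀
  have hm0 : 0 ≤ m := by rw [hm]; exact le_max_right _ _
  have hm0' : 0 ≤ m₀ := by rw [hm0def]; exact le_max_right _ _
  have hinvL : (0:ℝ) ≤ ((Λ*ϱ)^2)⁻¹ := by positivity
  have hNpos : (0:ℝ) ≤ N := by linarith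
  have hmub : m ≤ 2*N+2 := by
    rw [hm]
    apply max_le ?_ (by linarith)
    have h1 : -(2*N*(Λ*ϱ)^2) ≤ r^2 - 2*N*τ := by nlinarith
    have h2 := mul_le_mul_of_nonneg_left h1 hinvL
    have h3 : ((Λ*ϱ)^2)⁻¹ * -(2*N*(Λ*ϱ)^2) = -(2*N) := by field_simp
    rw [h3] at h2
    rw [hw]; linarith
  have hm0ub : m₀ ≤ 2*N+2 := by
    rw [hm0def]
    apply max_le ?_ (by linarith)
    have h1 : -(2*N*(Λ*ϱ)^2) ≤ r₀^2 - 2*N*ϱ^2 := by nlinarith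
    have h2 := mul_le_mul_of_nonneg_left h1 hinvL
    have h3 : ((Λ*ϱ)^2)⁻¹ * -(2*N*(Λ*ϱ)^2) = -(2*N) := by field_simp
    rw [h3] at h2
    rw [hw0]; linarith
  have hE1 : Real.exp (-(r^2/(4*τ))) ≤ 1 :=
    Real.exp_le_one_iff.2 (neg_nonpos.2 (by positivity))
  have hE01 : Real.exp (-(r₀^2/(4*ϱ^2))) ≤ 1 :=
    Real.exp_le_one_iff.2 (neg_nonpos.2 (by positivity))
  have hE0pos : (0:ℝ) < Real.exp (-(r₀^2/(4*ϱ^2))) := Real.exp_pos _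
  have hCpos : (0:ℝ) ≤ (2*N+2)^6 * Λ * δ * (ϱ^n)⁻¹ := by
    have : (0:ℝ) ≤ (2*N+2)^6 := by positivity
    have h2 : (0:ℝ) ≤ (ϱ^n)⁻¹ := by positivity
    exact mul_nonneg (mul_nonneg (mul_nonneg this (by linarith)) hδ0.le) h2
  by_cases hmz : m = 0
  · have h1 : (0:ℝ) ≤ A₀ * Real.exp (-(r₀^2/(4*ϱ^2))) * m₀^3 :=
      mul_nonneg (mul_nonneg hA0pos.le hE0pos.le) (pow_nonneg hm0' 3)
    have h2 : A * Real.exp (-(r^2/(4*τ))) * m^3 = 0 := by rw [hmz]; ring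
    rw [h2]
    linarith
  · have hwpos : 0 < w := by
      rcases lt_or_ge 0 w with h | h
      · exact h
      · exact absurd (hm.trans (max_eq_right h)) hmz
    have hrb : r ≤ (2*N+1)*(Λ*ϱ) := by
      have h1 : r^2 - 2*N*τ < (Λ*ϱ)^2 := by
        by_contra hcon
        push_neg at hcon
        have h2 := mul_le_mul_of_nonneg_left hcon hinvL
        have h3 : ((Λ*ϱ)^2)⁻¹ * (Λ*ϱ)^2 = 1 := by field_simp
        rw [h3] at h2
        rw [hw] at hwpos; linarith
      have h2 : r^2 < ((2*N+1)*(Λ*ϱ))^2 := by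
        have t1 : N*τ ≤ N*ϱ^2 := mul_le_mul_of_nonneg_left hτ2 hNpos
        have t2 : N*ϱ^2 ≤ N*(Λ*ϱ)^2 := mul_le_mul_of_nonneg_left hϱL hNpos
        have t3 : (0:ℝ) ≤ N*(Λ*ϱ)^2 := mul_nonneg hNpos hL2.le
        have t4 : (0:ℝ) ≤ N^2*(Λ*ϱ)^2 := by positivity
        linarith only [t1, t2, t3, t4, h1]
      by_contra hcon
      push_neg at hcon
      have h3 : ((2*N+1)*(Λ*ϱ))^2 < r^2 :=
        pow_lt_pow_left₀ hcon (by positivity) (by norm_num)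
      linarith
    have hδϱL : δ * ϱ ≤ Λ * ϱ :=
      mul_le_mul_of_nonneg_right (by linarith : δ ≤ Λ) hϱ.le
    have hr0b : r₀ ≤ (2*N+2)*(Λ*ϱ) := by
      have h := abs_le.1 hrr
      linarith [h.1, h.2]
    have hsq : |r^2 - r₀^2| ≤ (4*N+3)*Λ*δ*ϱ^2 := by
      have h1 : |r^2 - r₀^2| = |r - r₀| * (r + r₀) := by
        rw [show r^2 - r₀^2 = (r - r₀)*(r+r₀) by ring, abs_mul,
          abs_of_nonneg (show (0:ℝ) ≤ r + r₀ by linarith)]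
      rw [h1]
      have h2 : r + r₀ ≤ (4*N+3)*(Λ*ϱ) := by linarith
      calc |r - r₀| * (r + r₀) ≤ (δ*ϱ) * ((4*N+3)*(Λ*ϱ)) :=
            mul_le_mul hrr h2 (by linarith) (by positivity)
        _ = (4*N+3)*Λ*δ*ϱ^2 := by ring
    -- exp difference bound
    have hEdiff : Real.exp (-(r^2/(4*τ))) - Real.exp (-(r₀^2/(4*ϱ^2))) ≤ (4*N+3)*Λ*δ := by
      set x₁ := r^2/(4*τ) with hx1
      set x₂ := r₀^2/(4*ϱ^2) with hx2
      have hx₁ : 0 ≤ x₁ := by positivity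
      have hBnn : (0:ℝ) ≤ (4*N+3)*Λ*δ :=
        mul_nonneg (mul_nonneg (by linarith) (by linarith)) hδ0.le
      rcases le_total x₁ x₂ with h | h
      · have h5 := exp_neg_sub_exp_neg_le hx₁ h
        have hxx : x₂ - x₁ = (r₀^2*τ - r^2*ϱ^2) / (4*ϱ^2*τ) := by
          rw [hx1, hx2]; field_simp
        have h6 : x₂ - x₁ ≤ (4*N+3)*Λ*δ := by
          rw [hxx, div_le_iff₀ (by positivity)]
          have t1 : (r₀^2 - r^2)*τ ≤ ((4*N+3)*Λ*δ*ϱ^2)*τ := by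
            have := (abs_le.1 hsq).1
            exact mul_le_mul_of_nonneg_right (by linarith) hτpos.le
          have t2 : r^2*(τ - ϱ^2) ≤ 0 :=
            mul_nonpos_of_nonneg_of_nonpos (by positivity) (by linarith)
          have t3 : ((4*N+3)*Λ*δ*ϱ^2)*τ ≤ (4*N+3)*Λ*δ*(4*ϱ^2*τ) := by
            linarith only [mul_nonneg (mul_nonneg hBnn hϱ2.le) hτpos.le]
          linarith only [t1, t2, t3]
        linarith only [h5, h6]
      · have h5 : Real.exp (-x₁) ≤ Real.exp (-x₂) := by
          apply Real.exp_le_exp.2; linarith only [h]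
        linarith only [h5, hBnn]
    -- cutoff difference bound
    have hwdiff : |w - w₀| ≤ (6*N+3)*δ := by
      have e : w - w₀ = ((Λ*ϱ)^2)⁻¹ * ((r₀^2 - r^2) + 2*N*(τ - ϱ^2)) := by
        rw [hw, hw0]; ring
      rw [e, abs_mul, abs_of_nonneg hinvL]
      have h1 : |(r₀^2 - r^2) + 2*N*(τ - ϱ^2)| ≤ (4*N+3)*Λ*δ*ϱ^2 + 2*N*δ^2*ϱ^2 := by
        have h2 : |r₀^2 - r^2| ≤ (4*N+3)*Λ*δ*ϱ^2 := by rw [abs_sub_comm]; exact hsq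
        have h3 : |2*N*(τ - ϱ^2)| ≤ 2*N*δ^2*ϱ^2 := by
          rw [abs_of_nonpos (mul_nonpos_of_nonneg_of_nonpos (by linarith) (by linarith))]
          have h4 : ϱ^2 - τ ≤ δ^2*ϱ^2 := by linarith only [hτ1]
          linarith only [mul_le_mul_of_nonneg_left h4 (show (0:ℝ) ≤ 2*N by linarith)]
        calc |(r₀^2 - r^2) + 2*N*(τ - ϱ^2)| ≤ |r₀^2 - r^2| + |2*N*(τ - ϱ^2)| := abs_add_le _ _
          _ ≤ (4*N+3)*Λ*δ*ϱ^2 + 2*N*δ^2*ϱ^2 := by linarith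
      have h5 := mul_le_mul_of_nonneg_left h1 hinvL
      apply le_trans h5
      rw [inv_mul_le_iff₀ hL2]
      have hL2e : (Λ*ϱ)^2 = Λ^2*ϱ^2 := by ring
      rw [hL2e]
      have hΛsq : (1:ℝ) ≤ Λ^2 := by nlinarith only [hΛ]
      have u1 : (0:ℝ) ≤ ((4*N+3)*δ*ϱ^2) * (Λ*(Λ-1)) :=
        mul_nonneg (mul_nonneg (mul_nonneg (by linarith) hδ0.le) hϱ2.le)
          (mul_nonneg (by linarith) (by linarith))
      have u2 : (0:ℝ) ≤ (2*N*δ*ϱ^2) * (Λ^2-δ) :=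
        mul_nonneg (mul_nonneg (mul_nonneg (by linarith) hδ0.le) hϱ2.le) (by linarith)
      linarith only [u1, u2]
    have hcube : m^3 - m₀^3 ≤ 3*(2*N+2)^2 * ((6*N+3)*δ) := by
      have h1 : |m - m₀| ≤ |w - w₀| := by
        rw [hm, hm0def]; exact abs_max_sub_max_le_abs w w₀ 0
      have h2 : m - m₀ ≤ (6*N+3)*δ := le_trans (le_trans (le_abs_self _) h1) hwdiff
      have hrhs : (0:ℝ) ≤ 3*(2*N+2)^2 * ((6*N+3)*δ) :=
        mul_nonneg (mul_nonneg (by linarith) (sq_nonneg _))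
          (mul_nonneg (by linarith) hδ0.le)
      rcases le_total m m₀ with hmm | hmm
      · have : m^3 ≤ m₀^3 := pow_le_pow_left₀ hm0 hmm 3
        linarith only [this, hrhs]
      · have hfac : m^3 - m₀^3 = (m - m₀)*(m^2 + m*m₀ + m₀^2) := by ring
        have hq : m^2 + m*m₀ + m₀^2 ≤ 3*(2*N+2)^2 := by
          nlinarith only [hm0, hm0', hmub, hm0ub]
        rw [hfac]
        calc (m-m₀)*(m^2 + m*m₀ + m₀^2) ≤ ((6*N+3)*δ)*(3*(2*N+2)^2) :=
              mul_le_mul h2 hq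
                (by nlinarith only [hm0, hm0', sq_nonneg m, sq_nonneg m₀, mul_nonneg hm0 hm0'])
                (mul_nonneg (by linarith) hδ0.le)
          _ = 3*(2*N+2)^2 * ((6*N+3)*δ) := by ring
    -- assemble the three terms
    have hinv : (0:ℝ) ≤ (ϱ^n)⁻¹ := by positivity
    have hmcub : m^3 ≤ (2*N+2)^3 := pow_le_pow_left₀ hm0 hmub 3
    have hEm : Real.exp (-(r^2/(4*τ))) * m^3 ≤ (2*N+2)^3 := by
      have := mul_le_mul hE1 hmcub (pow_nonneg hm0 3) zero_le_one
      linarith only [this]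
    have hT1 : (A - A₀) * (Real.exp (-(r^2/(4*τ))) * m^3) ≤ (N*δ^2*(ϱ^n)⁻¹) * ((2*N+2)^3) :=
      mul_le_mul_aux (by linarith) hAsub hEm (pow_nonneg (by linarith) 3)
    have hT2 : A₀ * ((Real.exp (-(r^2/(4*τ))) - Real.exp (-(r₀^2/(4*ϱ^2)))) * m^3)
        ≤ (ϱ^n)⁻¹ * (((4*N+3)*Λ*δ) * ((2*N+2)^3)) := by
      apply mul_le_mul_aux hA0pos.le hA0le
      · have hBnn : (0:ℝ) ≤ (4*N+3)*Λ*δ :=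
          mul_nonneg (mul_nonneg (by linarith) (by linarith)) hδ0.le
        calc (Real.exp (-(r^2/(4*τ))) - Real.exp (-(r₀^2/(4*ϱ^2)))) * m^3
            = m^3 * (Real.exp (-(r^2/(4*τ))) - Real.exp (-(r₀^2/(4*ϱ^2)))) := by ring
          _ ≤ (2*N+2)^3 * ((4*N+3)*Λ*δ) :=
              mul_le_mul_aux (pow_nonneg hm0 3) hmcub hEdiff hBnn
          _ = ((4*N+3)*Λ*δ) * ((2*N+2)^3) := by ring
      · exact mul_nonneg (mul_nonneg (mul_nonneg (by linarith) (by linarith)) hδ0.le)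
          (pow_nonneg (by linarith) 3)
    have hT3 : (A₀ * Real.exp (-(r₀^2/(4*ϱ^2)))) * (m^3 - m₀^3)
        ≤ (ϱ^n)⁻¹ * (3*(2*N+2)^2 * ((6*N+3)*δ)) := by
      apply mul_le_mul_aux (mul_nonneg hA0pos.le hE0pos.le) ?_ hcube ?_
      · calc A₀ * Real.exp (-(r₀^2/(4*ϱ^2))) ≤ (ϱ^n)⁻¹ * 1 :=
            mul_le_mul hA0le hE01 hE0pos.le hinv
          _ = (ϱ^n)⁻¹ := mul_one _
      · exact mul_nonneg (mul_nonneg (by linarith) (sq_nonneg _))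
          (mul_nonneg (by linarith) hδ0.le)
    -- final polynomial bound
    have hpoly : N*δ*(2*N+2)^3 + (4*N+3)*Λ*(2*N+2)^3 + 3*(2*N+2)^2*(6*N+3) ≤ (2*N+2)^6*Λ := by
      have hq3 : (0:ℝ) ≤ (2*N+2)^3 := pow_nonneg (by linarith) 3
      have hq4 : (0:ℝ) ≤ (2*N+2)^4 := pow_nonneg (by linarith) 4
      have b1 : N*δ ≤ 2*N+2 := by
        have := mul_nonneg hNpos (show (0:ℝ) ≤ 1-δ by linarith)
        linarith only [this, hNpos]
      have u1 := mul_le_mul_of_nonneg_right b1 hq3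
      have u2 := mul_le_mul_of_nonneg_right hΛ hq4
      have a1 : N*δ*(2*N+2)^3 ≤ Λ*(2*N+2)^4 := by linarith only [u1, u2]
      have a2 : (4*N+3)*Λ*(2*N+2)^3 ≤ 2*Λ*(2*N+2)^4 := by
        have hlq3 : (0:ℝ) ≤ Λ*(2*N+2)^3 := mul_nonneg (by linarith) hq3
        linarith only [hlq3]
      have a3 : 3*(2*N+2)^2*(6*N+3) ≤ 9*(2*N+2)^3 := by
        linarith only [sq_nonneg (2*N+2)]
      have a4 : 9*(2*N+2)^3 ≤ 3*Λ*(2*N+2)^4 := by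
        have v1 : (0:ℝ) ≤ (2*N+2)^3*(2*N-2) := mul_nonneg hq3 (by linarith)
        linarith only [u2, v1, hq3]
      have a5 : 6*Λ*(2*N+2)^4 ≤ (2*N+2)^6*Λ := by
        have v2 : (0:ℝ) ≤ (Λ*(2*N+2)^4) * ((2*N+2)^2-6) := by
          apply mul_nonneg (mul_nonneg (by linarith) hq4)
          nlinarith only [hN, sq_nonneg N]
        linarith only [v2]
      linarith only [a1, a2, a3, a4, a5]
    have hfinal : (N*δ^2*(ϱ^n)⁻¹) * ((2*N+2)^3)
        + (ϱ^n)⁻¹ * (((4*N+3)*Λ*δ) * ((2*N+2)^3))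
        + (ϱ^n)⁻¹ * (3*(2*N+2)^2 * ((6*N+3)*δ))
        ≤ (2*N+2)^6 * Λ * δ * (ϱ^n)⁻¹ := by
      have h := mul_le_mul_of_nonneg_right hpoly (mul_nonneg hδ0.le hinv)
      linarith only [h]
    have hdecomp : A * Real.exp (-(r^2/(4*τ))) * m^3
        - A₀ * Real.exp (-(r₀^2/(4*ϱ^2))) * m₀^3
        = (A - A₀) * (Real.exp (-(r^2/(4*τ))) * m^3)
          + A₀ * ((Real.exp (-(r^2/(4*τ))) - Real.exp (-(r₀^2/(4*ϱ^2)))) * m^3)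
          + (A₀ * Real.exp (-(r₀^2/(4*ϱ^2)))) * (m^3 - m₀^3) := by ring
    linarith only [hT1, hT2, hT3, hfinal, hdecomp]

lemma gaussPair_nonneg {d : ℕ} (n : ℕ) {t₀ t ρ : ℝ} (ht : t < t₀) (x₀ x : EV d) :
    0 ≤ gaussK n t₀ x₀ t x * gaussCut n t₀ x₀ ρ t x := by
  unfold gaussK gaussCut
  have hπ := Real.pi_gt_three
  have h1 : (0:ℝ) ≤ (4 * Real.pi * (t₀ - t)) ^ (-(n:ℝ)/2) :=
    Real.rpow_nonneg (by nlinarith) _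
  exact mul_nonneg (mul_nonneg h1 (Real.exp_pos _).le) (pow_nonneg (le_max_right _ _) 3)

lemma gaussPair_le {d : ℕ} (n : ℕ) {t₀ t ρ : ℝ} (ht : t < t₀) (hρ : 0 < ρ)
    (hτρ : t₀ - t ≤ ρ^2) (x₀ x : EV d) :
    gaussK n t₀ x₀ t x * gaussCut n t₀ x₀ ρ t x ≤
      (4*Real.pi*(t₀-t))^(-(n:ℝ)/2) * (2*(n:ℝ)+2)^3 := by
  unfold gaussK gaussCut
  have hπ := Real.pi_gt_three
  have hA : (0:ℝ) ≤ (4*Real.pi*(t₀-t))^(-(n:ℝ)/2) := Real.rpow_nonneg (by nlinarith) _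
  have hE : Real.exp (‖x - x₀‖^2 / (4*(t - t₀))) ≤ 1 := by
    apply Real.exp_le_one_iff.2
    apply div_nonpos_of_nonneg_of_nonpos (by positivity) (by linarith)
  have hρ2 : (0:ℝ) < ρ^2 := by positivity
  have hm : max (1 - (ρ^2)⁻¹ * (‖x - x₀‖^2 + 2*(n:ℝ)*(t - t₀))) 0 ≤ 2*(n:ℝ)+2 := by
    apply max_le ?_ (by positivity)
    have h1 : -(2*(n:ℝ)*ρ^2) ≤ ‖x - x₀‖^2 + 2*(n:ℝ)*(t - t₀) := by
      have h2 := mul_le_mul_of_nonneg_left hτρ (show (0:ℝ) ≤ 2*(n:ℝ) by positivity)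
      nlinarith [sq_nonneg ‖x - x₀‖]
    have h2 := mul_le_mul_of_nonneg_left h1 (inv_nonneg.2 hρ2.le)
    have h3 : (ρ^2)⁻¹ * -(2*(n:ℝ)*ρ^2) = -(2*(n:ℝ)) := by field_simp
    rw [h3] at h2
    linarith
  have hm3 : (max (1 - (ρ^2)⁻¹ * (‖x - x₀‖^2 + 2*(n:ℝ)*(t - t₀))) 0)^3 ≤ (2*(n:ℝ)+2)^3 :=
    pow_le_pow_left₀ (le_max_right _ _) hm 3
  calc (4*Real.pi*(t₀-t))^(-(n:ℝ)/2) * Real.exp (‖x - x₀‖^2 / (4*(t - t₀))) *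
        (max (1 - (ρ^2)⁻¹ * (‖x - x₀‖^2 + 2*(n:ℝ)*(t - t₀))) 0)^3
      ≤ ((4*Real.pi*(t₀-t))^(-(n:ℝ)/2) * 1) * ((2*(n:ℝ)+2)^3) :=
        mul_le_mul (mul_le_mul_of_nonneg_left hE hA) hm3
          (pow_nonneg (le_max_right _ _) 3) (mul_nonneg hA zero_le_one)
    _ = (4*Real.pi*(t₀-t))^(-(n:ℝ)/2) * (2*(n:ℝ)+2)^3 := by ring

lemma cut_zero {d : ℕ} (n : ℕ) {ϱ Λ δ t s' : ℝ} {y' y₀ x : EV d}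
    (hϱ : 0 < ϱ) (hΛ : 1 ≤ Λ) (hδ0 : 0 ≤ δ) (hδ1 : δ ≤ 1)
    (hy : dist y' y₀ ≤ δ * ϱ) (hts : t ≤ s') (hst : s' - t ≤ ϱ^2)
    (hx : (2*(n:ℝ)+2)^6 * Λ * ϱ ≤ dist x y₀) :
    gaussCut n s' y' (Λ*ϱ) t x = 0 := by
  unfold gaussCut
  set c := 2*(n:ℝ)+2 with hc
  have hn0 : (0:ℝ) ≤ (n:ℝ) := Nat.cast_nonneg n
  have hc2 : (2:ℝ) ≤ c := by rw [hc]; linarith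
  have hC : c ≤ c^6 := le_self_pow₀ (by linarith) (by norm_num)
  have hL : (0:ℝ) < Λ*ϱ := by positivity
  have h6 : 2*(n:ℝ) = c - 2 := by rw [hc]; ring
  have hδϱ : δ*ϱ ≤ Λ*ϱ := mul_le_mul_of_nonneg_right (by linarith) hϱ.le
  have hr' : (c^6 - 1)*(Λ*ϱ) ≤ ‖x - y'‖ := by
    have h1 := dist_triangle x y' y₀
    simp only [dist_eq_norm] at h1 hx hy
    linarith
  have hrpos : (0:ℝ) ≤ (c^6 - 1)*(Λ*ϱ) := mul_nonneg (by linarith) hL.le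
  have hsq : ((c^6-1)*(Λ*ϱ))^2 ≤ ‖x - y'‖^2 := pow_le_pow_left₀ hrpos hr' 2
  have h3 : ϱ^2 ≤ (Λ*ϱ)^2 := by
    have hΛ2 : (1:ℝ) ≤ Λ^2 := by nlinarith
    nlinarith [mul_le_mul_of_nonneg_right hΛ2 (sq_nonneg ϱ)]
  have h4 : c - 1 ≤ (c^6-1)^2 := by nlinarith [hC, hc2]
  have h5 : (c-1)*(Λ*ϱ)^2 ≤ ((c^6-1)*(Λ*ϱ))^2 := by
    have := mul_le_mul_of_nonneg_right h4 (sq_nonneg (Λ*ϱ))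
    nlinarith [this]
  have h2c : -((c-2)*ϱ^2) ≤ (c-2)*(t - s') := by
    have h2 := mul_le_mul_of_nonneg_left hst (show (0:ℝ) ≤ 2*(n:ℝ) by positivity)
    rw [h6] at h2
    linarith
  have w1' : (c-2)*ϱ^2 ≤ (c-2)*(Λ*ϱ)^2 :=
    mul_le_mul_of_nonneg_left h3 (by linarith)
  have hkey : (Λ*ϱ)^2 ≤ ‖x - y'‖^2 + (c-2)*(t - s') := by
    linarith only [hsq, h5, h2c, w1']
  have hw : 1 - ((Λ*ϱ)^2)⁻¹ * (‖x - y'‖^2 + 2*(n:ℝ)*(t - s')) ≤ 0 := by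
    rw [h6]
    have h7 := mul_le_mul_of_nonneg_left hkey (inv_nonneg.2 (sq_nonneg (Λ*ϱ)))
    have h8 : ((Λ*ϱ)^2)⁻¹ * (Λ*ϱ)^2 = 1 := by
      field_simp
    rw [h8] at h7
    linarith
  rw [max_eq_right hw]
  norm_num

lemma mainCore {d : ℕ} (n : ℕ) (hn : 1 ≤ n) {ϱ Λ δ s₀ s : ℝ} (y₀ y x : EV d)
    (hϱ : 0 < ϱ) (hΛ : 1 ≤ Λ) (hδ0 : 0 < δ) (hδΛ : δ * Λ ≤ 1/2)
    (hs : s₀ - δ^2*ϱ^2 < s) (hs2 : s ≤ s₀) (hy : dist y y₀ ≤ δ * ϱ) :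
    gaussK n s y (s₀ - ϱ^2) x * gaussCut n s y (Λ*ϱ) (s₀ - ϱ^2) x ≤
      gaussK n s₀ y₀ (s₀ - ϱ^2) x * gaussCut n s₀ y₀ (Λ*ϱ) (s₀ - ϱ^2) x
        + (2*(n:ℝ)+2)^6 * Λ * δ * (ϱ^n)⁻¹ := by
  have hrr : |‖x - y‖ - ‖x - y₀‖| ≤ δ * ϱ := by
    have h1 := abs_norm_sub_norm_le (x - y) (x - y₀)
    have h2 : (x - y) - (x - y₀) = y₀ - y := by abel
    rw [h2] at h1
    rw [dist_comm, dist_eq_norm] at hy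
    linarith
  have h := realCore n hn ϱ Λ δ (s - (s₀ - ϱ^2)) ‖x - y‖ ‖x - y₀‖ hϱ hΛ hδ0 hδΛ
    (by nlinarith) (by nlinarith) (norm_nonneg _) (norm_nonneg _) hrr
  unfold gaussK gaussCut
  rw [show s₀ - ϱ^2 - s = -(s - (s₀ - ϱ^2)) by ring,
      show s₀ - (s₀ - ϱ^2) = ϱ^2 by ring,
      show s₀ - ϱ^2 - s₀ = -ϱ^2 by ring]
  rw [show (4:ℝ) * -(s - (s₀ - ϱ^2)) = -(4*(s - (s₀ - ϱ^2))) by ring, div_neg,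
      show (4:ℝ) * -ϱ^2 = -(4*ϱ^2) by ring, div_neg,
      show 2*(n:ℝ) * -(s - (s₀ - ϱ^2)) = -(2*(n:ℝ)*(s - (s₀ - ϱ^2))) by ring,
      show 2*(n:ℝ) * -ϱ^2 = -(2*(n:ℝ)*ϱ^2) by ring,
      ← sub_eq_add_neg, ← sub_eq_add_neg]
  convert h using 6 <;> ring


set_option maxHeartbeats 2000000 in
/-- Lemma B.2 (Gaussian density ratios at nearby points). -/
theorem gaussian_density_nearby (n k : ℕ) (hn : 0 < n) (hk : 0 < k) :
    ∃ C : ℝ, 1 < C ∧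
      ∀ (ϱ M κ Λ δ s₀ : ℝ) (y₀ : EV (n + k)) (μ : Measure (EV (n + k))),
        0 < ϱ → 0 < M → 0 < κ → 1 ≤ Λ → δ ∈ Ioc 0 (1 / (C * Λ)) →
        μ (ball y₀ (C * Λ * ϱ)) ≤ ENNReal.ofReal (M * ϱ ^ n) →
        (∫ x, gaussK n s₀ y₀ (s₀ - ϱ ^ 2) x *
            gaussCut n s₀ y₀ (Λ * ϱ) (s₀ - ϱ ^ 2) x ∂μ) ≤ 1 + κ →
        ∀ s ∈ Ioc (s₀ - δ ^ 2 * ϱ ^ 2) s₀, ∀ y ∈ ball y₀ (δ * ϱ),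
          (∫ x, gaussK n s y (s₀ - ϱ ^ 2) x *
              gaussCut n s y (Λ * ϱ) (s₀ - ϱ ^ 2) x ∂μ) ≤ 1 + κ + C * M * Λ * δ := by
  have hN1 : (1:ℝ) ≤ (n:ℝ) := by exact_mod_cast hn
  have hC64 : (64:ℝ) ≤ (2*(n:ℝ)+2)^6 := by
    calc (64:ℝ) = 2^6 := by norm_num
      _ ≤ (2*(n:ℝ)+2)^6 := pow_le_pow_left₀ (by norm_num) (by linarith) 6
  refine ⟨(2*(n:ℝ)+2)^6, by linarith, ?_⟩
  intro ϱ M κ Λ δ s₀ y₀ μ hϱ hM hκ hΛ hδmem hmass hbase s hs y hy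
  set C := (2*(n:ℝ)+2)^6 with hCdef
  clear_value C
  obtain ⟨hδ0, hδle⟩ := hδmem
  obtain ⟨hs1, hs2⟩ := hs
  have hΛ0 : (0:ℝ) < Λ := by linarith
  have hCpos : (0:ℝ) < C := by linarith
  have hCΛ : (0:ℝ) < C*Λ := mul_pos hCpos hΛ0
  have hδC : δ * (C*Λ) ≤ 1 := (le_div_iff₀ hCΛ).1 hδle
  have hδΛ : δ*Λ ≤ 1/2 := by
    nlinarith [mul_nonneg (show (0:ℝ) ≤ C - 64 by linarith) (mul_nonneg hδ0.le hΛ0.le)]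
  have hδ1 : δ ≤ 1 := by
    have := mul_le_mul_of_nonneg_left hΛ hδ0.le
    linarith
  have hyd : dist y y₀ ≤ δ * ϱ := (mem_ball.1 hy).le
  have hϱ2 : (0:ℝ) < ϱ^2 := by positivity
  set t := s₀ - ϱ^2 with htdef
  clear_value t
  have hδsq : δ^2 ≤ 1 := by nlinarith
  have hts : t < s := by nlinarith
  have hts0 : t < s₀ := by nlinarith
  set B := ball y₀ (C*Λ*ϱ) with hBdef
  have hBmeas : MeasurableSet B := measurableSet_ball
  have hμB : μ B ≠ ⊤ := ne_top_of_le_ne_top ENNReal.ofReal_ne_top hmass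
  have hnotB : ∀ x : EV (n+k), x ∉ B → (2*(n:ℝ)+2)^6 * Λ * ϱ ≤ dist x y₀ := by
    intro x hx
    rw [← hCdef]
    by_contra hcon
    push_neg at hcon
    exact hx (mem_ball.2 hcon)
  have hfzero : ∀ x : EV (n+k), x ∉ B → gaussCut n s y (Λ*ϱ) t x = 0 := fun x hx =>
    cut_zero n hϱ hΛ hδ0.le hδ1 hyd hts.le (by linarith) (hnotB x hx)
  have hf0zero : ∀ x : EV (n+k), x ∉ B → gaussCut n s₀ y₀ (Λ*ϱ) t x = 0 := fun x hx =>
    cut_zero n hϱ hΛ le_rfl zero_le_one (by simp [dist_self]) hts0.le (by linarith)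
      (hnotB x hx)
  have hcont : Continuous (fun x : EV (n+k) => gaussK n s y t x * gaussCut n s y (Λ*ϱ) t x) := by
    unfold gaussK gaussCut; fun_prop
  have hcont0 : Continuous (fun x : EV (n+k) => gaussK n s₀ y₀ t x * gaussCut n s₀ y₀ (Λ*ϱ) t x) := by
    unfold gaussK gaussCut; fun_prop
  have hnn : ∀ x, 0 ≤ gaussK n s y t x * gaussCut n s y (Λ*ϱ) t x := fun x =>
    gaussPair_nonneg n hts y x
  have hnn0 : ∀ x, 0 ≤ gaussK n s₀ y₀ t x * gaussCut n s₀ y₀ (Λ*ϱ) t x := fun x =>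
    gaussPair_nonneg n hts0 y₀ x
  have hΛϱ : (0:ℝ) < Λ*ϱ := mul_pos hΛ0 hϱ
  have hΛsq : (1:ℝ) ≤ Λ^2 := by nlinarith
  have hρbound : s - t ≤ (Λ*ϱ)^2 := by
    nlinarith [mul_le_mul_of_nonneg_right hΛsq (sq_nonneg ϱ)]
  have hρbound0 : s₀ - t ≤ (Λ*ϱ)^2 := by
    nlinarith [mul_le_mul_of_nonneg_right hΛsq (sq_nonneg ϱ)]
  have hint : Integrable (fun x => gaussK n s y t x * gaussCut n s y (Λ*ϱ) t x) μ := by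
    have heq : (fun x : EV (n+k) => gaussK n s y t x * gaussCut n s y (Λ*ϱ) t x)
        = B.indicator (fun x => gaussK n s y t x * gaussCut n s y (Λ*ϱ) t x) := by
      funext x
      by_cases hx : x ∈ B
      · rw [Set.indicator_of_mem hx]
      · rw [Set.indicator_of_notMem hx, hfzero x hx, mul_zero]
    rw [heq, integrable_indicator_iff hBmeas]
    apply Measure.integrableOn_of_bounded hμB hcont.aestronglyMeasurable
    filter_upwards with x
    rw [Real.norm_eq_abs, abs_of_nonneg (hnn x)]
    exact gaussPair_le n hts hΛϱ hρbound y x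
  have hint0 : Integrable (fun x => gaussK n s₀ y₀ t x * gaussCut n s₀ y₀ (Λ*ϱ) t x) μ := by
    have heq : (fun x : EV (n+k) => gaussK n s₀ y₀ t x * gaussCut n s₀ y₀ (Λ*ϱ) t x)
        = B.indicator (fun x => gaussK n s₀ y₀ t x * gaussCut n s₀ y₀ (Λ*ϱ) t x) := by
      funext x
      by_cases hx : x ∈ B
      · rw [Set.indicator_of_mem hx]
      · rw [Set.indicator_of_notMem hx, hf0zero x hx, mul_zero]
    rw [heq, integrable_indicator_iff hBmeas]
    apply Measure.integrableOn_of_bounded hμB hcont0.aestronglyMeasurable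
    filter_upwards with x
    rw [Real.norm_eq_abs, abs_of_nonneg (hnn0 x)]
    exact gaussPair_le n hts0 hΛϱ hρbound0 y₀ x
  have hK : (0:ℝ) ≤ C*Λ*δ*(ϱ^n)⁻¹ :=
    mul_nonneg (mul_nonneg (mul_nonneg hCpos.le hΛ0.le) hδ0.le) (by positivity)
  have hindint : Integrable (B.indicator fun _ : EV (n+k) => C*Λ*δ*(ϱ^n)⁻¹) μ := by
    rw [integrable_indicator_iff hBmeas]
    exact integrableOn_const hμB
  have hpt : ∀ x, gaussK n s y t x * gaussCut n s y (Λ*ϱ) t x ≤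
      gaussK n s₀ y₀ t x * gaussCut n s₀ y₀ (Λ*ϱ) t x
        + B.indicator (fun _ => C*Λ*δ*(ϱ^n)⁻¹) x := by
    intro x
    by_cases hx : x ∈ B
    · rw [Set.indicator_of_mem hx]
      have h := mainCore n hn y₀ y x hϱ hΛ hδ0 hδΛ hs1 hs2 hyd
      rw [← hCdef, ← htdef] at h
      exact h
    · rw [Set.indicator_of_notMem hx, hfzero x hx, mul_zero, add_zero]
      exact hnn0 x
  calc (∫ x, gaussK n s y t x * gaussCut n s y (Λ*ϱ) t x ∂μ)
      ≤ ∫ x, (gaussK n s₀ y₀ t x * gaussCut n s₀ y₀ (Λ*ϱ) t x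
          + B.indicator (fun _ => C*Λ*δ*(ϱ^n)⁻¹) x) ∂μ :=
        integral_mono hint (hint0.add hindint) hpt
    _ = (∫ x, gaussK n s₀ y₀ t x * gaussCut n s₀ y₀ (Λ*ϱ) t x ∂μ)
        + ∫ x, B.indicator (fun _ => C*Λ*δ*(ϱ^n)⁻¹) x ∂μ := integral_add hint0 hindint
    _ ≤ (1+κ) + (μ B).toReal * (C*Λ*δ*(ϱ^n)⁻¹) := by
        rw [integral_indicator_const _ hBmeas]
        simp only [smul_eq_mul, measureReal_def]
        linarith [hbase]
    _ ≤ 1 + κ + C*M*Λ*δ := by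
        have h1 : (μ B).toReal ≤ M*ϱ^n :=
          ENNReal.toReal_le_of_le_ofReal (by positivity) hmass
        have h2 : (μ B).toReal * (C*Λ*δ*(ϱ^n)⁻¹) ≤ (M*ϱ^n) * (C*Λ*δ*(ϱ^n)⁻¹) :=
          mul_le_mul_of_nonneg_right h1 hK
        have hϱn : (ϱ:ℝ)^n ≠ 0 := pow_ne_zero _ hϱ.ne'
        have h3 : (M*ϱ^n) * (C*Λ*δ*(ϱ^n)⁻¹) = C*M*Λ*δ := by
          field_simp
        linarith

end BrakkePaper
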